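/- Let n, V, H be positive integers, E ∈ [−1,1]^{H×n} with columns e⁽ⁱ⁾, B ∈ ℝ^{V×H} with rows b_v, with the feasible set nonempty (there exists X ∈ [−1,1]^{V×n} with (1/n)·E·x_v = b_v for all v). Let ℓ₊, ℓ₋ : [−1,1] → ℝ be continuous with ℓ₊ monotone nonincreasing and ℓ₋ monotone nondecreasing, set Γ = ℓ₋ − ℓ₊, and suppose σ : ℝ → [−1,1] satisfies Γ(σ(m)) = max(Γ(−1), min(m, Γ(1))) for all m ∈ ℝ. Define Ψ(m) = ℓ₊(σ(m)) + ℓ₋(σ(m)) + |m − Γ(σ(m))|. Then the infimum over reconstructions X̃ ∈ [−1,1]^{V×n} of the supremum over feasible X ∈ [−1,1]^{V×n} of (1/n)·Σ_{i=1}^n Σ_{v=1}^V [ ((1+x_v⁽ⁱ⁾)/2)·ℓ₊(x̃_v⁽ⁱ⁾) + ((1−x_v⁽ⁱ⁾)/2)·ℓ₋(x̃_v⁽ⁱ⁾) ] equals (1/2)·Σ_{v=1}^V inf_{w ∈ ℝ^H} [ −b_vᵀw + (1/n)·Σ_{i=1}^n Ψ(wᵀe⁽ⁱ⁾) ]; moreover,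 if w_v* attains the v-th infimum, the reconstructions x̃_v⁽ⁱ⁾ = σ(w_v*ᵀe⁽ⁱ⁾) attain the minimax value. -/

import Mathlib

/-- The generalized potential well built from partial losses `lp`, `lm` and the clipped
pseudoinverse `σ` of `Γ = lm - lp`:
`Ψ(m) = ℓ₊(σ(m)) + ℓ₋(σ(m)) + |m - Γ(σ(m))|`. -/
noncomputable def PsiGen (lp lm sig : ℝ → ℝ) (m : ℝ) : ℝ :=
  lp (sig m) + lm (sig m) + |m - (lm (sig m) - lp (sig m))|

/-- The general bitwise reconstruction loss
`ℓ(x, x̃) = Σ_v [((1+x_v)/2)·ℓ₊(x̃_v) + ((1-x_v)/2)·ℓ₋(x̃_v)]`. -/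
noncomputable def genLoss (lp lm : ℝ → ℝ) {V : ℕ} (x xt : Fin V → ℝ) : ℝ :=
  ∑ v, ((1 + x v) / 2 * lp (xt v) + (1 - x v) / 2 * lm (xt v))

/-!
The game decouples over the rows `v`, since both the constraints and the loss do. For one row
and `mᵢ = wᵀe⁽ⁱ⁾`, twice the loss of `x̃ᵢ = σ(mᵢ)` against `xᵢ ∈ [-1,1]` is at most
`Ψ(mᵢ) - xᵢmᵢ`, and for feasible `x` the average of `xᵢmᵢ` is `bᵀw`: this is weak duality.
Conversely, monotonicity of `ℓ₊, ℓ₋` and the clipping in `σ` give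
`Ψ(m) = min_{t ∈ [-1,1]} ℓ₊(t) + ℓ₋(t) + |m - Γ(t)|`, so for any reconstruction `x̃` the dual
objective is at most `(1/n)·Σᵢ (ℓ₊ + ℓ₋)(x̃ᵢ)` plus the dual objective of the linear program
`max {-(1/n)·Σᵢ xᵢΓ(x̃ᵢ) : x feasible}`. Strong duality for this program (Hahn–Banach separation
in the compact image of the cube) turns the bound into twice the loss of `x̃` against a maximizing
feasible `x`.
-/
open Set Matrix

section PartialLosses

variable {lp lm : ℝ → ℝ} {S : Set ℝ}

theorem MonotoneOn.sub_antitoneOn (hlm : MonotoneOn lm S) (hlp : AntitoneOn lp S) :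
    MonotoneOn (fun t => lm t - lp t) S := by
  simpa only [sub_eq_add_neg] using hlm.add hlp.neg

theorem AntitoneOn.apply_le_of_sub_le_sub (hlp : AntitoneOn lp S) (hlm : MonotoneOn lm S)
    {s t : ℝ} (hs : s ∈ S) (ht : t ∈ S) (h : lm t - lp t ≤ lm s - lp s) : lp s ≤ lp t := by
  rcases le_total s t with hst | hts
  · linarith [hlm hs ht hst]
  · exact hlp ht hs hts

theorem MonotoneOn.apply_le_of_sub_le_sub (hlm : MonotoneOn lm S) (hlp : AntitoneOn lp S)
    {s t : ℝ} (hs : s ∈ S) (ht : t ∈ S) (h : lm s - lp s ≤ lm t - lp t) : lm s ≤ lm t := by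
  rcases le_total s t with hst | hts
  · exact hlm hs ht hst
  · linarith [hlp ht hs hts]

theorem PsiGen_le_of_mem_Icc {sig : ℝ → ℝ} (hlp : AntitoneOn lp (Icc (-1) 1))
    (hlm : MonotoneOn lm (Icc (-1) 1)) (hsig : ∀ m, sig m ∈ Icc (-1) 1)
    (hsigG : ∀ m, lm (sig m) - lp (sig m) = max (lm (-1) - lp (-1)) (min m (lm 1 - lp 1)))
    (m : ℝ) {t : ℝ} (ht : t ∈ Icc (-1) 1) :
    PsiGen lp lm sig m ≤ lp t + lm t + |m - (lm t - lp t)| := by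
  have hΓ := hlm.sub_antitoneOn hlp
  have hΓ_lower : lm (-1) - lp (-1) ≤ lm t - lp t := hΓ (by norm_num) ht ht.1
  have hΓ_upper : lm t - lp t ≤ lm 1 - lp 1 := hΓ ht (by norm_num) ht.2
  have hs := hsig m
  have hΓs := hsigG m
  have h₁ := le_abs_self (m - (lm t - lp t))
  have h₂ := neg_le_abs (m - (lm t - lp t))
  unfold PsiGen
  -- Unless `Γ(σ m) = m`, the clipping pins `Γ(σ m)` to the extreme value `Γ(∓1)` of `Γ`.
  rcases lt_trichotomy m (lm (sig m) - lp (sig m)) with hm | hm | hm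
  · have : lm (sig m) ≤ lm t := by
      refine hlm.apply_le_of_sub_le_sub hlp hs ht ?_
      rcases max_choice (lm (-1) - lp (-1)) (min m (lm 1 - lp 1)) with h | h <;> rw [h] at hΓs
      · linarith
      · linarith [min_le_left m (lm 1 - lp 1)]
    rw [abs_of_neg (by linarith)]
    linarith
  · rw [← hm, sub_self, abs_zero]
    rcases le_total (sig m) t with hst | hts
    · linarith [hlm hs ht hst]
    · linarith [hlp ht hs hts]
  · have : lp (sig m) ≤ lp t := by
      refine hlp.apply_le_of_sub_le_sub hlm hs ht ?_
      rcases min_choice m (lm 1 - lp 1) with h | h <;> rw [h] at hΓs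
      · linarith [le_max_right (lm (-1) - lp (-1)) m]
      · linarith [le_max_right (lm (-1) - lp (-1)) (lm 1 - lp 1)]
    rw [abs_of_pos (by linarith)]
    linarith

theorem mul_le_abs_of_mem_Icc {a : ℝ} (ha : a ∈ Icc (-1) 1) (d : ℝ) : a * d ≤ |d| :=
  (le_abs_self _).trans <| by
    rw [abs_mul]; exact mul_le_of_le_one_left (abs_nonneg d) (abs_le.2 ha)

theorem loss_le_half_PsiGen_sub {sig : ℝ → ℝ} {a : ℝ} (ha : a ∈ Icc (-1) 1) (m : ℝ) :
    (1 + a) / 2 * lp (sig m) + (1 - a) / 2 * lm (sig m) ≤ 1 / 2 * (PsiGen lp lm sig m - a * m) := by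
  have := mul_le_abs_of_mem_Icc ha (m - (lm (sig m) - lp (sig m)))
  unfold PsiGen
  linarith

theorem min_le_loss (hlp : AntitoneOn lp (Icc (-1) 1)) (hlm : MonotoneOn lm (Icc (-1) 1))
    {a t : ℝ} (ha : a ∈ Icc (-1) 1) (ht : t ∈ Icc (-1) 1) :
    min (lp 1) (lm (-1)) ≤ (1 + a) / 2 * lp t + (1 - a) / 2 * lm t := by
  have hp : min (lp 1) (lm (-1)) ≤ lp t := (min_le_left _ _).trans (hlp ht (by norm_num) ht.2)
  have hm : min (lp 1) (lm (-1)) ≤ lm t := (min_le_right _ _).trans (hlm (by norm_num) ht ht.1)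
  nlinarith [ha.1, ha.2]

theorem loss_le_max (hlp : AntitoneOn lp (Icc (-1) 1)) (hlm : MonotoneOn lm (Icc (-1) 1))
    {a t : ℝ} (ha : a ∈ Icc (-1) 1) (ht : t ∈ Icc (-1) 1) :
    (1 + a) / 2 * lp t + (1 - a) / 2 * lm t ≤ max (lp (-1)) (lm 1) := by
  have hp : lp t ≤ max (lp (-1)) (lm 1) := (hlp (by norm_num) ht ht.1).trans (le_max_left _ _)
  have hm : lm t ≤ max (lp (-1)) (lm 1) := (hlm ht (by norm_num) ht.2).trans (le_max_right _ _)
  nlinarith [ha.1, ha.2]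

end PartialLosses

theorem ContinuousLinearMap.apply_eq_dotProduct_add_mul {κ : Type*} [Fintype κ] [DecidableEq κ]
    (φ : (κ → ℝ) × ℝ →L[ℝ] ℝ) (y : κ → ℝ) (r : ℝ) :
    φ (y, r) = (fun h => φ (Pi.single h 1, 0)) ⬝ᵥ y + r * φ (0, 1) := by
  have : (y, r) = ∑ h, y h • ((Pi.single h 1 : κ → ℝ), (0 : ℝ)) + r • (0, 1) := by
    ext <;> simp [Prod.fst_sum, Prod.snd_sum, Finset.sum_apply, Pi.single_apply]
  simp only [this, map_add, map_sum, map_smul, smul_eq_mul, dotProduct, mul_comm]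

theorem IsCompact.strong_duality {X κ : Type*} [AddCommGroup X] [Module ℝ X]
    [TopologicalSpace X] [Fintype κ] {K : Set X} (hK : IsCompact K) (hKc : Convex ℝ K)
    (L : X →L[ℝ] κ → ℝ) (f : X →L[ℝ] ℝ) {b : κ → ℝ} (hb : ∃ x ∈ K, L x = b) :
    ∃ x₀ ∈ K, L x₀ = b ∧
      ∀ ε > 0, ∃ w : κ → ℝ, ∀ x ∈ K, f x + w ⬝ᵥ (L x - b) < f x₀ + ε := by
  classical
  obtain ⟨x₀, ⟨hx₀K, hx₀b⟩, hmax⟩ :=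
    (hK.inter_right (isClosed_eq L.continuous continuous_const)).exists_isMaxOn hb
      f.continuous.continuousOn
  refine ⟨x₀, hx₀K, hx₀b, fun ε hε => ?_⟩
  -- Separate `(b, f x₀ + ε)` from the image of `K` under `(L, f)`; the separating functional
  -- has positive last coordinate, and dividing its first coordinates by it gives `w`.
  let T : X →ₗ[ℝ] (κ → ℝ) × ℝ := (L : X →ₗ[ℝ] κ → ℝ).prod f
  have hz : (b, f x₀ + ε) ∉ T '' K := by
    rintro ⟨x, hx, hxz⟩
    obtain ⟨hLx, hfx⟩ := Prod.ext_iff.1 hxz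
    have : f x ≤ f x₀ := hmax ⟨hx, hLx⟩
    change f x = _ at hfx
    linarith
  obtain ⟨φ, u, hφK, hφz⟩ := geometric_hahn_banach_closed_point (hKc.linear_image T)
    (hK.image (L.continuous.prodMk f.continuous)).isClosed hz
  set p : κ → ℝ := fun h => φ (Pi.single h 1, 0)
  set lam := φ (0, 1)
  have hsep : ∀ x ∈ K, p ⬝ᵥ L x + f x * lam < p ⬝ᵥ b + (f x₀ + ε) * lam := fun x hx => by
    have h : φ (L x, f x) < φ (b, f x₀ + ε) := (hφK _ ⟨x, hx, rfl⟩).trans hφz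
    rwa [φ.apply_eq_dotProduct_add_mul (L x), φ.apply_eq_dotProduct_add_mul b] at h
  have hlam : 0 < lam := by
    have := hsep x₀ hx₀K
    rw [show L x₀ = b from hx₀b] at this
    nlinarith
  refine ⟨lam⁻¹ • p, fun x hx => ?_⟩
  have := hsep x hx
  rw [smul_dotProduct, dotProduct_sub, smul_eq_mul, ← mul_lt_mul_iff_left₀ hlam]
  field_simp
  linarith

theorem exists_mem_pi_Icc_dotProduct_eq_sum_abs {ι : Type*} [Fintype ι] (d : ι → ℝ) :
    ∃ s ∈ univ.pi (fun _ => Icc (-1) 1), d ⬝ᵥ s = ∑ i, |d i| :=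
  ⟨fun i => SignType.sign (d i),
    mem_univ_pi.2 fun i => by rcases SignType.sign (d i) with _ | _ | _ <;> norm_num,
    Finset.sum_congr rfl fun i _ => self_mul_sign (d i)⟩

section Row

variable {n H : ℕ}

def rowFeasible (E : Matrix (Fin H) (Fin n) ℝ) (b : Fin H → ℝ) : Set (Fin n → ℝ) :=
  {x | (∀ i, x i ∈ Icc (-1) 1) ∧ ∀ h, 1 / (n : ℝ) * ∑ i, E h i * x i = b h}

noncomputable def rowLoss (lp lm : ℝ → ℝ) (x xt : Fin n → ℝ) : ℝ :=
  1 / (n : ℝ) * genLoss lp lm x xt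

noncomputable def dualObjective (lp lm sig : ℝ → ℝ) (E : Matrix (Fin H) (Fin n) ℝ)
    (b w : Fin H → ℝ) : ℝ :=
  -(b ⬝ᵥ w) + 1 / (n : ℝ) * ∑ i, PsiGen lp lm sig ((w ᵥ* E) i)

variable {lp lm sig : ℝ → ℝ} {E : Matrix (Fin H) (Fin n) ℝ} {b : Fin H → ℝ}

theorem dotProduct_eq_of_mem_rowFeasible {x : Fin n → ℝ} (hx : x ∈ rowFeasible E b)
    (w : Fin H → ℝ) : b ⬝ᵥ w = 1 / (n : ℝ) * (x ⬝ᵥ (w ᵥ* E)) := by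
  have hb : b = (1 / (n : ℝ)) • (E *ᵥ x) := funext fun h => (hx.2 h).symm
  rw [hb, dotProduct_comm, dotProduct_smul, dotProduct_mulVec, dotProduct_comm, smul_eq_mul]

theorem rowFeasible_strong_duality (c : Fin n → ℝ) (hb : (rowFeasible E b).Nonempty) :
    ∃ x ∈ rowFeasible E b, ∀ ε > 0, ∃ w : Fin H → ℝ,
      -(b ⬝ᵥ w) + 1 / (n : ℝ) * ∑ i, |(w ᵥ* E) i - c i| < -(1 / (n : ℝ) * (c ⬝ᵥ x)) + ε := by
  let L := LinearMap.toContinuousLinearMap ((1 / (n : ℝ)) • mulVecLin E)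
  let f := LinearMap.toContinuousLinearMap (-(1 / (n : ℝ)) • dotProductBilin ℝ ℝ c)
  have hL : ∀ x : Fin n → ℝ, L x = b ↔ ∀ h, 1 / (n : ℝ) * ∑ i, E h i * x i = b h :=
    fun _ => funext_iff
  obtain ⟨x₀, hx₀, hLx₀, hdual⟩ := (isCompact_univ_pi fun _ => isCompact_Icc).strong_duality
    (convex_pi fun _ _ => convex_Icc (-1 : ℝ) 1) L f
    (by obtain ⟨x, hx⟩ := hb; exact ⟨x, mem_univ_pi.2 hx.1, (hL x).2 hx.2⟩)
  refine ⟨x₀, ⟨mem_univ_pi.1 hx₀, (hL x₀).1 hLx₀⟩, fun ε hε => ?_⟩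
  obtain ⟨w, hw⟩ := hdual ε hε
  let d := w ᵥ* E - c
  have hLag : ∀ s, f s + w ⬝ᵥ (L s - b) = 1 / (n : ℝ) * (d ⬝ᵥ s) - b ⬝ᵥ w := fun s => by
    have hLs : w ⬝ᵥ L s = 1 / (n : ℝ) * ((w ᵥ* E) ⬝ᵥ s) := by
      change w ⬝ᵥ ((1 / (n : ℝ)) • (E *ᵥ s)) = _
      rw [dotProduct_smul, dotProduct_mulVec, smul_eq_mul]
    change -(1 / (n : ℝ)) * (c ⬝ᵥ s) + _ = _
    rw [dotProduct_sub, hLs, sub_dotProduct, dotProduct_comm w b]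
    ring
  obtain ⟨s, hs, hds⟩ := exists_mem_pi_Icc_dotProduct_eq_sum_abs d
  have hbound := hw s hs
  rw [hLag, hds] at hbound
  change _ < -(1 / (n : ℝ)) * (c ⬝ᵥ x₀) + ε at hbound
  refine ⟨w, ?_⟩
  change -(b ⬝ᵥ w) + 1 / (n : ℝ) * ∑ i, |d i| < _
  linarith

theorem rowLoss_le_half_dualObjective {x : Fin n → ℝ} (hx : x ∈ rowFeasible E b)
    (w : Fin H → ℝ) :
    rowLoss lp lm x (fun i => sig ((w ᵥ* E) i)) ≤ 1 / 2 * dualObjective lp lm sig E b w := by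
  calc rowLoss lp lm x (fun i => sig ((w ᵥ* E) i))
      ≤ 1 / (n : ℝ) * ∑ i, 1 / 2 * (PsiGen lp lm sig ((w ᵥ* E) i) - x i * (w ᵥ* E) i) :=
        mul_le_mul_of_nonneg_left
          (Finset.sum_le_sum fun i _ => loss_le_half_PsiGen_sub (hx.1 i) _) (by positivity)
    _ = 1 / 2 * dualObjective lp lm sig E b w := by
        rw [dualObjective, dotProduct_eq_of_mem_rowFeasible hx, dotProduct, ← Finset.mul_sum,
          Finset.sum_sub_distrib]
        ring

theorem sum_min_le_rowLoss (hlp : AntitoneOn lp (Icc (-1) 1)) (hlm : MonotoneOn lm (Icc (-1) 1))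
    {x xt : Fin n → ℝ} (hx : ∀ i, x i ∈ Icc (-1) 1) (hxt : ∀ i, xt i ∈ Icc (-1) 1) :
    1 / (n : ℝ) * ∑ _i : Fin n, min (lp 1) (lm (-1)) ≤ rowLoss lp lm x xt :=
  mul_le_mul_of_nonneg_left (Finset.sum_le_sum fun i _ => min_le_loss hlp hlm (hx i) (hxt i))
    (by positivity)

theorem rowLoss_le_sum_max (hlp : AntitoneOn lp (Icc (-1) 1)) (hlm : MonotoneOn lm (Icc (-1) 1))
    {x xt : Fin n → ℝ} (hx : ∀ i, x i ∈ Icc (-1) 1) (hxt : ∀ i, xt i ∈ Icc (-1) 1) :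
    rowLoss lp lm x xt ≤ 1 / (n : ℝ) * ∑ _i : Fin n, max (lp (-1)) (lm 1) :=
  mul_le_mul_of_nonneg_left (Finset.sum_le_sum fun i _ => loss_le_max hlp hlm (hx i) (hxt i))
    (by positivity)

theorem bddBelow_range_dualObjective (hlp : AntitoneOn lp (Icc (-1) 1))
    (hlm : MonotoneOn lm (Icc (-1) 1)) (hsig : ∀ m, sig m ∈ Icc (-1) 1)
    (hb : (rowFeasible E b).Nonempty) : BddBelow (range (dualObjective lp lm sig E b)) := by
  obtain ⟨x, hx⟩ := hb
  refine ⟨2 * (1 / (n : ℝ) * ∑ _i : Fin n, min (lp 1) (lm (-1))), forall_mem_range.2 fun w => ?_⟩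
  linarith [sum_min_le_rowLoss hlp hlm hx.1 (fun i => hsig ((w ᵥ* E) i)),
    rowLoss_le_half_dualObjective (lp := lp) (lm := lm) (sig := sig) hx w]

theorem two_mul_rowLoss (x xt : Fin n → ℝ) :
    2 * rowLoss lp lm x xt = 1 / (n : ℝ) * ∑ i, (lp (xt i) + lm (xt i))
      - 1 / (n : ℝ) * ((fun i => lm (xt i) - lp (xt i)) ⬝ᵥ x) := by
  simp only [rowLoss, genLoss, dotProduct, Finset.mul_sum, ← Finset.sum_sub_distrib]
  exact Finset.sum_congr rfl fun i _ => by ring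

theorem exists_mem_rowFeasible_half_iInf_le (hlp : AntitoneOn lp (Icc (-1) 1))
    (hlm : MonotoneOn lm (Icc (-1) 1)) (hsig : ∀ m, sig m ∈ Icc (-1) 1)
    (hsigG : ∀ m, lm (sig m) - lp (sig m) = max (lm (-1) - lp (-1)) (min m (lm 1 - lp 1)))
    (hb : (rowFeasible E b).Nonempty) {xt : Fin n → ℝ} (hxt : ∀ i, xt i ∈ Icc (-1) 1) :
    ∃ x ∈ rowFeasible E b, 1 / 2 * ⨅ w, dualObjective lp lm sig E b w ≤ rowLoss lp lm x xt := by
  obtain ⟨x, hx, hdual⟩ :=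
    rowFeasible_strong_duality (fun i => lm (xt i) - lp (xt i)) hb
  refine ⟨x, hx, ?_⟩
  suffices ∀ ε > 0, ⨅ w, dualObjective lp lm sig E b w ≤ 2 * rowLoss lp lm x xt + ε by
    linarith [le_of_forall_pos_le_add this]
  intro ε hε
  obtain ⟨w, hw⟩ := hdual ε hε
  have hPsi : ∑ i, PsiGen lp lm sig ((w ᵥ* E) i)
      ≤ ∑ i, (lp (xt i) + lm (xt i) + |(w ᵥ* E) i - (lm (xt i) - lp (xt i))|) :=
    Finset.sum_le_sum fun i _ => PsiGen_le_of_mem_Icc hlp hlm hsig hsigG _ (hxt i)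
  calc ⨅ w, dualObjective lp lm sig E b w
      ≤ dualObjective lp lm sig E b w := ciInf_le (bddBelow_range_dualObjective hlp hlm hsig hb) w
    _ ≤ 2 * rowLoss lp lm x xt + ε := by
        have := mul_le_mul_of_nonneg_left hPsi (by positivity : (0 : ℝ) ≤ 1 / (n : ℝ))
        rw [Finset.sum_add_distrib, mul_add] at this
        rw [dualObjective, two_mul_rowLoss]
        linarith

theorem one_div_mul_sum_genLoss_eq_sum_rowLoss {V : ℕ} (X Xt : Fin V → Fin n → ℝ) :
    1 / (n : ℝ) * ∑ i, genLoss lp lm (fun v => X v i) (fun v => Xt v i)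
      = ∑ v, rowLoss lp lm (X v) (Xt v) := by
  simp only [genLoss, rowLoss]
  rw [Finset.sum_comm, Finset.mul_sum]

end Row

theorem le_sum_ciInf {ι W : Type*} [Fintype ι] [Nonempty W] {D : ι → W → ℝ} {a : ℝ}
    (h : ∀ w : ι → W, a ≤ ∑ v, D v (w v)) : a ≤ ∑ v, ⨅ w, D v w := by
  refine le_of_forall_pos_le_add fun ε hε => ?_
  set δ := ε / (Fintype.card ι + 1)
  have hδ : Fintype.card ι * δ ≤ ε := by
    rw [mul_div_assoc', div_le_iff₀ (by positivity)]
    linarith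
  choose w hw using fun v => exists_lt_of_ciInf_lt (lt_add_of_pos_right (⨅ w, D v w)
    (by positivity : 0 < δ))
  calc a ≤ ∑ v, D v (w v) := h w
    _ ≤ ∑ v, ((⨅ w, D v w) + δ) := Finset.sum_le_sum fun v _ => (hw v).le
    _ ≤ (∑ v, ⨅ w, D v w) + ε := by
        rw [Finset.sum_add_distrib, Finset.sum_const, Finset.card_univ, nsmul_eq_mul]
        linarith

section DecoupledGame

variable {ι α W : Type*} [Fintype ι] {g : α → α → ℝ} {D : ι → W → ℝ} {r : W → α}
  {P : ι → Set α} {T : Set α} {F : (ι → α) → Prop}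

theorem bddAbove_range_sum (hF : ∀ X, F X ↔ ∀ v, X v ∈ P v) {C : ℝ}
    (hC : ∀ v, ∀ x ∈ P v, ∀ xt ∈ T, g x xt ≤ C) {xt : ι → α} (hxt : ∀ v, xt v ∈ T) :
    BddAbove (range fun X : {X // F X} => ∑ v, g (X.1 v) (xt v)) :=
  ⟨∑ _v : ι, C, forall_mem_range.2 fun X =>
    Finset.sum_le_sum fun v _ => hC v _ ((hF X.1).1 X.2 v) _ (hxt v)⟩

theorem ciSup_sum_le [Nonempty {X // F X}] (hF : ∀ X, F X ↔ ∀ v, X v ∈ P v)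
    (hweak : ∀ v, ∀ x ∈ P v, ∀ w, g x (r w) ≤ D v w) (w : ι → W) :
    ⨆ X : {X // F X}, ∑ v, g (X.1 v) (r (w v)) ≤ ∑ v, D v (w v) :=
  ciSup_le fun X => Finset.sum_le_sum fun v _ => hweak v _ ((hF X.1).1 X.2 v) (w v)

theorem sum_ciInf_le_ciSup_sum (hF : ∀ X, F X ↔ ∀ v, X v ∈ P v) {C : ℝ}
    (hC : ∀ v, ∀ x ∈ P v, ∀ xt ∈ T, g x xt ≤ C)
    (hstrong : ∀ v, ∀ xt ∈ T, ∃ x ∈ P v, ⨅ w, D v w ≤ g x xt) {xt : ι → α}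
    (hxt : ∀ v, xt v ∈ T) :
    ∑ v, ⨅ w, D v w ≤ ⨆ X : {X // F X}, ∑ v, g (X.1 v) (xt v) := by
  choose x hxP hx using fun v => hstrong v (xt v) (hxt v)
  exact le_ciSup_of_le (bddAbove_range_sum hF hC hxt) ⟨x, (hF x).2 hxP⟩
    (Finset.sum_le_sum fun v _ => hx v)

theorem ciInf_ciSup_sum_eq_sum_ciInf [Nonempty W] (hF : ∀ X, F X ↔ ∀ v, X v ∈ P v)
    (hr : ∀ w, r w ∈ T) {C : ℝ} (hC : ∀ v, ∀ x ∈ P v, ∀ xt ∈ T, g x xt ≤ C)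
    (hweak : ∀ v, ∀ x ∈ P v, ∀ w, g x (r w) ≤ D v w)
    (hstrong : ∀ v, ∀ xt ∈ T, ∃ x ∈ P v, ⨅ w, D v w ≤ g x xt) :
    (⨅ Xt : {Xt : ι → α // ∀ v, Xt v ∈ T}, ⨆ X : {X // F X}, ∑ v, g (X.1 v) (Xt.1 v))
        = ∑ v, ⨅ w, D v w ∧
      ∀ wstar : ι → W, (∀ v w, D v (wstar v) ≤ D v w) →
        ⨆ X : {X // F X}, ∑ v, g (X.1 v) (r (wstar v)) = ∑ v, ⨅ w, D v w := by
  obtain ⟨w₀⟩ := ‹Nonempty W›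
  have : Nonempty {Xt : ι → α // ∀ v, Xt v ∈ T} := ⟨⟨fun _ => r w₀, fun _ => hr w₀⟩⟩
  have : Nonempty {X // F X} := by
    choose x hx _ using fun v => hstrong v (r w₀) (hr w₀)
    exact ⟨⟨x, (hF x).2 hx⟩⟩
  have hlower := fun Xt : {Xt : ι → α // ∀ v, Xt v ∈ T} =>
    sum_ciInf_le_ciSup_sum hF hC hstrong Xt.2
  refine ⟨le_antisymm (le_sum_ciInf fun w => ?_) (le_ciInf hlower), fun wstar hwstar => ?_⟩
  · exact (ciInf_le ⟨_, forall_mem_range.2 hlower⟩ ⟨fun v => r (w v), fun v => hr _⟩).trans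
      (ciSup_sum_le hF hweak w)
  · exact le_antisymm ((ciSup_sum_le hF hweak wstar).trans
      (Finset.sum_le_sum fun v _ => le_ciInf (hwstar v))) (hlower ⟨_, fun v => hr _⟩)

end DecoupledGame

theorem general_loss_minimax_general
    (n V H : ℕ)
    (E : Fin H → Fin n → ℝ)
    (B : Fin V → Fin H → ℝ)
    (hfeas : ∃ X : Fin V → Fin n → ℝ,
      (∀ v i, X v i ∈ Set.Icc (-1 : ℝ) 1) ∧
      ∀ v h, (1 / (n : ℝ)) * ∑ i, E h i * X v i = B v h)
    (lp lm : ℝ → ℝ)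
    (hlp : AntitoneOn lp (Set.Icc (-1 : ℝ) 1))
    (hlm : MonotoneOn lm (Set.Icc (-1 : ℝ) 1))
    (sig : ℝ → ℝ) (hsig : ∀ m, sig m ∈ Set.Icc (-1 : ℝ) 1)
    (hsigG : ∀ m, lm (sig m) - lp (sig m) = max (lm (-1) - lp (-1)) (min m (lm 1 - lp 1))) :
    (⨅ Xt : {Xt : Fin V → Fin n → ℝ // ∀ v i, Xt v i ∈ Set.Icc (-1 : ℝ) 1},
      ⨆ X : {X : Fin V → Fin n → ℝ //
          (∀ v i, X v i ∈ Set.Icc (-1 : ℝ) 1) ∧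
          ∀ v h, (1 / (n : ℝ)) * ∑ i, E h i * X v i = B v h},
        (1 / (n : ℝ)) * ∑ i, genLoss lp lm (fun v => X.1 v i) (fun v => Xt.1 v i))
      = (1 / 2) * ∑ v, ⨅ w : Fin H → ℝ,
          (-(∑ h, B v h * w h) + (1 / (n : ℝ)) * ∑ i, PsiGen lp lm sig (∑ h, w h * E h i))
    ∧
    ∀ wstar : Fin V → Fin H → ℝ,
      (∀ v, ∀ w : Fin H → ℝ,
        (-(∑ h, B v h * wstar v h)
            + (1 / (n : ℝ)) * ∑ i, PsiGen lp lm sig (∑ h, wstar v h * E h i))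
          ≤ (-(∑ h, B v h * w h)
            + (1 / (n : ℝ)) * ∑ i, PsiGen lp lm sig (∑ h, w h * E h i))) →
      (⨆ X : {X : Fin V → Fin n → ℝ //
          (∀ v i, X v i ∈ Set.Icc (-1 : ℝ) 1) ∧
          ∀ v h, (1 / (n : ℝ)) * ∑ i, E h i * X v i = B v h},
        (1 / (n : ℝ)) * ∑ i, genLoss lp lm (fun v => X.1 v i)
          (fun v => sig (∑ h, wstar v h * E h i)))
        = (1 / 2) * ∑ v, ⨅ w : Fin H → ℝ,
            (-(∑ h, B v h * w h)
              + (1 / (n : ℝ)) * ∑ i, PsiGen lp lm sig (∑ h, w h * E h i)) := by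
  obtain ⟨X₀, hX₀⟩ := hfeas
  have hhalf : (0 : ℝ) ≤ 1 / 2 := by norm_num
  obtain ⟨hvalue, hoptimal⟩ := ciInf_ciSup_sum_eq_sum_ciInf (g := rowLoss lp lm)
    (D := fun v w => 1 / 2 * dualObjective lp lm sig E (B v) w)
    (r := fun w i => sig ((w ᵥ* E) i)) (P := fun v => rowFeasible E (B v))
    (T := {x | ∀ i, x i ∈ Icc (-1) 1}) (fun _ => forall_and.symm) (fun _ _ => hsig _)
    (fun _ _ hx _ hxt => rowLoss_le_sum_max hlp hlm hx.1 hxt)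
    (fun _ _ hx w => rowLoss_le_half_dualObjective hx w)
    (fun v _ hxt => by
      simpa only [← Real.mul_iInf_of_nonneg hhalf] using exists_mem_rowFeasible_half_iInf_le
        hlp hlm hsig hsigG ⟨X₀ v, hX₀.1 v, hX₀.2 v⟩ hxt)
  simp only [one_div_mul_sum_genLoss_eq_sum_rowLoss]
  rw [Finset.mul_sum (a := (1 / 2 : ℝ))]
  simp only [Real.mul_iInf_of_nonneg hhalf]
  exact ⟨hvalue, fun wstar h => hoptimal wstar fun v w => mul_le_mul_of_nonneg_left (h v w) hhalf⟩

/-- Minimax theorem for general reconstruction losses: the minimax value of the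
autoencoding game equals `(1/2)·Σ_v inf_w [-b_vᵀw + (1/n)·Σᵢ Ψ(wᵀe⁽ⁱ⁾)]`, and if
`w_v*` attains each infimum then the reconstructions `x̃_v⁽ⁱ⁾ = σ(w_v*ᵀe⁽ⁱ⁾)` attain
the minimax value. -/
theorem general_loss_minimax
    (n V H : ℕ) (hn : 0 < n) (hV : 0 < V) (hH : 0 < H)
    (E : Fin H → Fin n → ℝ) (hE : ∀ h i, E h i ∈ Set.Icc (-1 : ℝ) 1)
    (B : Fin V → Fin H → ℝ)
    (hfeas : ∃ X : Fin V → Fin n → ℝ,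
      (∀ v i, X v i ∈ Set.Icc (-1 : ℝ) 1) ∧
      ∀ v h, (1 / (n : ℝ)) * ∑ i, E h i * X v i = B v h)
    (lp lm : ℝ → ℝ)
    (hlpc : ContinuousOn lp (Set.Icc (-1 : ℝ) 1))
    (hlmc : ContinuousOn lm (Set.Icc (-1 : ℝ) 1))
    (hlp : AntitoneOn lp (Set.Icc (-1 : ℝ) 1))
    (hlm : MonotoneOn lm (Set.Icc (-1 : ℝ) 1))
    (sig : ℝ → ℝ) (hsig : ∀ m, sig m ∈ Set.Icc (-1 : ℝ) 1)
    (hsigG : ∀ m, lm (sig m) - lp (sig m) = max (lm (-1) - lp (-1)) (min m (lm 1 - lp 1))) :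
    (⨅ Xt : {Xt : Fin V → Fin n → ℝ // ∀ v i, Xt v i ∈ Set.Icc (-1 : ℝ) 1},
      ⨆ X : {X : Fin V → Fin n → ℝ //
          (∀ v i, X v i ∈ Set.Icc (-1 : ℝ) 1) ∧
          ∀ v h, (1 / (n : ℝ)) * ∑ i, E h i * X v i = B v h},
        (1 / (n : ℝ)) * ∑ i, genLoss lp lm (fun v => X.1 v i) (fun v => Xt.1 v i))
      = (1 / 2) * ∑ v, ⨅ w : Fin H → ℝ,
          (-(∑ h, B v h * w h) + (1 / (n : ℝ)) * ∑ i, PsiGen lp lm sig (∑ h, w h * E h i))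
    ∧
    ∀ wstar : Fin V → Fin H → ℝ,
      (∀ v, ∀ w : Fin H → ℝ,
        (-(∑ h, B v h * wstar v h)
            + (1 / (n : ℝ)) * ∑ i, PsiGen lp lm sig (∑ h, wstar v h * E h i))
          ≤ (-(∑ h, B v h * w h)
            + (1 / (n : ℝ)) * ∑ i, PsiGen lp lm sig (∑ h, w h * E h i))) →
      (⨆ X : {X : Fin V → Fin n → ℝ //
          (∀ v i, X v i ∈ Set.Icc (-1 : ℝ) 1) ∧
          ∀ v h, (1 / (n : ℝ)) * ∑ i, E h i * X v i = B v h},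
        (1 / (n : ℝ)) * ∑ i, genLoss lp lm (fun v => X.1 v i)
          (fun v => sig (∑ h, wstar v h * E h i)))
        = (1 / 2) * ∑ v, ⨅ w : Fin H → ℝ,
            (-(∑ h, B v h * w h)
              + (1 / (n : ℝ)) * ∑ i, PsiGen lp lm sig (∑ h, w h * E h i)) :=
  general_loss_minimax_general n V H E B hfeas lp lm hlp hlm sig hsig hsigG
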